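/- arXiv:2007.12592 — 6 statements merged into one kernel-verified Lean document; each statement's English description precedes it below -/
import Mathlib

section
/- Let L be the free ℤ-module ℤ²² equipped with the even symmetric bilinear form ⟨·,·⟩ given by the orthogonal block decomposition H ⊕ H ⊕ H ⊕ (−E₈) ⊕ (−E₈) described in the context (a model of the K3 lattice). Fix an integer k with 0 ≤ k ≤ 9 and even integers B and A. Then there exist elements κ̂, β, d₁, …, d_k of L such that ⟨κ̂, κ̂⟩ = B, ⟨β, β⟩ = A, ⟨κ̂, β⟩ = 0, ⟨κ̂, d_i⟩ = 1 and ⟨β, d_i⟩ = 0 for all i, and ⟨d_i, d_j⟩ = −2δ_{ij} for all i, j; moreover, κ̂, β, d₁, …, d_k generate a primitive sublattice of L, i.e., every x ∈ L whose image in L ⊗_ℤ ℝ is a real linear combination of κ̂, β, d₁, …, d_k is an integral linear combination of them. -/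
/-!
Write `x_{i,1}, x_{i,2}` for the standard basis of the `i`-th hyperbolic plane and let
`B = 2p`, `A = 2q`. Take `κ̂ = x_{1,1} + p x_{1,2}` and `β = x_{2,1} + q x_{2,2}`. The lattice
contains nine mutually orthogonal roots `r₁, …, r₉` orthogonal to the first two planes, namely
`y_{i,1}, y_{i,3}, y_{i,5}, y_{i,7}` in each `−E₈` and `x_{3,1} − x_{3,2}`, and
`d_m = x_{1,2} + r_m` has all the required products. Primitivity: each of `κ̂, β, d_m` has a
coordinate (`x_{1,1}`, `x_{2,1}`, and a coordinate private to `r_m`) equal to `1` on which all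
the other generators vanish, so the real coefficients of an integral vector in their span are
integral coordinates of that vector.
-/

/-- The `(-E₈)` Gram matrix on indices `0, …, 7` (0-indexed version of the
basis `y₁, …, y₈` in the paper): `⟨y_j, y_j⟩ = -2`, `⟨y_j, y_k⟩ = 1` if
`{j, k}` is one of `{1,2}, …, {6,7}, {5,8}` (1-indexed), and `0` otherwise. -/
def negE8Gram (a b : ℕ) : ℤ :=
  if a = b then -2
  else if (b = a + 1 ∧ b ≤ 6) ∨ (a = b + 1 ∧ a ≤ 6) ∨ (a = 4 ∧ b = 7) ∨ (a = 7 ∧ b = 4)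
    then 1
  else 0

/-- The Gram matrix of the K3 lattice `L = H ⊕ H ⊕ H ⊕ (−E₈) ⊕ (−E₈)` on the
basis `x_{1,1}, x_{1,2}, x_{2,1}, x_{2,2}, x_{3,1}, x_{3,2}, y_{1,1}, …, y_{1,8},
y_{2,1}, …, y_{2,8}` (indices `0, …, 21`): each hyperbolic block `{2i, 2i+1}`
(for `i = 0, 1, 2`) has `⟨x, x⟩ = 0` on the diagonal and `⟨x_{i,1}, x_{i,2}⟩ = 1`;
indices `6, …, 13` and `14, …, 21` each carry a copy of `−E₈`; distinct blocks
are orthogonal. -/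
def K3Gram (a b : ℕ) : ℤ :=
  if a < 6 ∧ b < 6 then (if a / 2 = b / 2 ∧ a ≠ b then 1 else 0)
  else if 6 ≤ a ∧ a < 14 ∧ 6 ≤ b ∧ b < 14 then negE8Gram (a - 6) (b - 6)
  else if 14 ≤ a ∧ a < 22 ∧ 14 ≤ b ∧ b < 22 then negE8Gram (a - 14) (b - 14)
  else 0

/-- The symmetric bilinear form of the K3 lattice on `ℤ²²`. -/
def K3Form (x y : Fin 22 → ℤ) : ℤ :=
  ∑ i : Fin 22, ∑ j : Fin 22, x i * K3Gram i j * y j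

def K3Bilin : LinearMap.BilinForm ℤ (Fin 22 → ℤ) :=
  Matrix.toBilin' (Matrix.of fun i j : Fin 22 => K3Gram i j)

theorem K3Form_eq_K3Bilin (x y : Fin 22 → ℤ) : K3Form x y = K3Bilin x y :=
  (Matrix.toBilin'_apply _ x y).symm

theorem K3Bilin_single_single (i j : Fin 22) :
    K3Bilin (Pi.single i 1) (Pi.single j 1) = K3Gram i j :=
  Matrix.toBilin'_single _ i j

theorem eq_sum_smul_of_cast_eq_sum_smul {ι n : Type*} [Fintype ι] [DecidableEq ι]
    {w : ι → n → ℤ} {J : ι → n} (hJ : ∀ i j, w i (J j) = if i = j then 1 else 0)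
    {x : n → ℤ} {t : ι → ℝ} (hx : (fun m => (x m : ℝ)) = ∑ i, t i • fun m => (w i m : ℝ)) :
    x = ∑ i, x (J i) • w i := by
  have hx_apply (m : n) : (x m : ℝ) = ∑ i, t i * w i m := by
    simpa [Finset.sum_apply] using congrFun hx m
  have ht (j : ι) : t j = x (J j) := by simp [hx_apply, hJ]
  ext m
  have h := hx_apply m
  simp only [ht] at h
  simp only [Finset.sum_apply, Pi.smul_apply, smul_eq_mul]
  exact_mod_cast h

/-- `y_{1,1}, y_{1,3}, y_{1,5}, y_{1,7}, y_{2,1}, y_{2,3}, y_{2,5}, y_{2,7}, x_{3,1} − x_{3,2}`. -/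
def orthRoot : Fin 9 → Fin 22 → ℤ :=
  ![Pi.single 6 1, Pi.single 8 1, Pi.single 10 1, Pi.single 12 1,
    Pi.single 14 1, Pi.single 16 1, Pi.single 18 1, Pi.single 20 1,
    Pi.single 4 1 - Pi.single 5 1]

def orthRootCoord : Fin 9 → Fin 22 := ![6, 8, 10, 12, 14, 16, 18, 20, 4]

theorem K3Bilin_orthRoot_orthRoot (m m' : Fin 9) :
    K3Bilin (orthRoot m) (orthRoot m') = if m = m' then -2 else 0 := by
  rw [← K3Form_eq_K3Bilin]; revert m m'; decide

theorem K3Bilin_single_orthRoot {i : Fin 22} (hi : i < 4) (m : Fin 9) :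
    K3Bilin (Pi.single i 1) (orthRoot m) = 0 := by
  rw [← K3Form_eq_K3Bilin]; revert i m; decide

theorem K3Bilin_orthRoot_single {i : Fin 22} (hi : i < 4) (m : Fin 9) :
    K3Bilin (orthRoot m) (Pi.single i 1) = 0 := by
  rw [← K3Form_eq_K3Bilin]; revert i m; decide

theorem orthRoot_apply_orthRootCoord (m m' : Fin 9) :
    orthRoot m (orthRootCoord m') = if m = m' then 1 else 0 := by
  revert m m'; decide

theorem orthRoot_apply_of_lt_four {i : Fin 22} (hi : i < 4) (m : Fin 9) : orthRoot m i = 0 := by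
  revert i m; decide

theorem orthRootCoord_ne_of_lt_four {i : Fin 22} (hi : i < 4) (m : Fin 9) :
    orthRootCoord m ≠ i := by
  revert i m; decide

def kappaVec (p : ℤ) : Fin 22 → ℤ := Pi.single 0 1 + p • Pi.single 1 1

def betaVec (q : ℤ) : Fin 22 → ℤ := Pi.single 2 1 + q • Pi.single 3 1

def dVec (m : Fin 9) : Fin 22 → ℤ := Pi.single 1 1 + orthRoot m

section Gram

variable (p q : ℤ) (m m' : Fin 9)

theorem K3Bilin_kappaVec_self : K3Bilin (kappaVec p) (kappaVec p) = 2 * p := by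
  simp only [kappaVec, map_add, map_smul, LinearMap.add_apply, LinearMap.smul_apply,
    K3Bilin_single_single]
  norm_num [K3Gram]
  ring

theorem K3Bilin_betaVec_self : K3Bilin (betaVec q) (betaVec q) = 2 * q := by
  simp only [betaVec, map_add, map_smul, LinearMap.add_apply, LinearMap.smul_apply,
    K3Bilin_single_single]
  norm_num [K3Gram]
  ring

theorem K3Bilin_kappaVec_betaVec : K3Bilin (kappaVec p) (betaVec q) = 0 := by
  simp only [kappaVec, betaVec, map_add, map_smul, LinearMap.add_apply, LinearMap.smul_apply,
    K3Bilin_single_single]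
  norm_num [K3Gram]

theorem K3Bilin_kappaVec_dVec : K3Bilin (kappaVec p) (dVec m) = 1 := by
  simp only [kappaVec, dVec, map_add, map_smul, LinearMap.add_apply, LinearMap.smul_apply,
    K3Bilin_single_single, K3Bilin_single_orthRoot (by decide : (0 : Fin 22) < 4),
    K3Bilin_single_orthRoot (by decide : (1 : Fin 22) < 4)]
  norm_num [K3Gram]

theorem K3Bilin_betaVec_dVec : K3Bilin (betaVec q) (dVec m) = 0 := by
  simp only [betaVec, dVec, map_add, map_smul, LinearMap.add_apply, LinearMap.smul_apply,
    K3Bilin_single_single, K3Bilin_single_orthRoot (by decide : (2 : Fin 22) < 4),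
    K3Bilin_single_orthRoot (by decide : (3 : Fin 22) < 4)]
  norm_num [K3Gram]

theorem K3Bilin_dVec_dVec : K3Bilin (dVec m) (dVec m') = if m = m' then -2 else 0 := by
  simp only [dVec, map_add, LinearMap.add_apply, K3Bilin_single_single,
    K3Bilin_orthRoot_orthRoot, K3Bilin_single_orthRoot (by decide : (1 : Fin 22) < 4),
    K3Bilin_orthRoot_single (by decide : (1 : Fin 22) < 4)]
  norm_num [K3Gram]

end Gram

theorem exists_int_coeffs_kappaVec_betaVec_dVec {k : ℕ} {f : Fin k → Fin 9}
    (hf : Function.Injective f) (p q : ℤ) {x : Fin 22 → ℤ} {a c : ℝ} {t : Fin k → ℝ}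
    (hx : (fun n => (x n : ℝ)) =
      a • (fun n => (kappaVec p n : ℝ)) + c • (fun n => (betaVec q n : ℝ)) +
        ∑ i, t i • (fun n => (dVec (f i) n : ℝ))) :
    ∃ (a' c' : ℤ) (t' : Fin k → ℤ),
      x = a' • kappaVec p + c' • betaVec q + ∑ i, t' i • dVec (f i) := by
  let w : Fin (k + 2) → Fin 22 → ℤ := Fin.cons (kappaVec p) (Fin.cons (betaVec q) (dVec ∘ f))
  let J : Fin (k + 2) → Fin 22 := Fin.cons 0 (Fin.cons 2 (orthRootCoord ∘ f))
  have hJ (i j : Fin (k + 2)) : w i (J j) = if i = j then 1 else 0 := by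
    refine Fin.cases (Fin.cases ?_ (Fin.cases ?_ fun b => ?_))
      (Fin.cases (Fin.cases ?_ (Fin.cases ?_ fun b => ?_))
        fun a => Fin.cases ?_ (Fin.cases ?_ fun b => ?_)) i j
    all_goals simp [w, J, kappaVec, betaVec, dVec, orthRoot_apply_orthRootCoord, hf.eq_iff,
      orthRoot_apply_of_lt_four, orthRootCoord_ne_of_lt_four, Fin.succ_ne_zero,
      (Fin.succ_ne_zero _).symm, Fin.succ_succ_ne_one, (Fin.succ_succ_ne_one _).symm]
  have hx_sum := eq_sum_smul_of_cast_eq_sum_smul hJ (t := Fin.cons a (Fin.cons c t))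
    (by simpa [w, Fin.sum_univ_succ, add_assoc] using hx)
  exact ⟨x 0, x 2, fun i => x (orthRootCoord (f i)), by
    simpa [w, J, Fin.sum_univ_succ, add_assoc] using hx_sum⟩

/-- Fix `0 ≤ k ≤ 9` and even integers `B`, `A`.  There exist `κ̂`, `β`,
`d₁, …, d_k` in the K3 lattice `L = ℤ²²` with `⟨κ̂,κ̂⟩ = B`, `⟨β,β⟩ = A`,
`⟨κ̂,β⟩ = 0`, `⟨κ̂,dᵢ⟩ = 1`, `⟨β,dᵢ⟩ = 0`, `⟨dᵢ,dⱼ⟩ = -2δᵢⱼ`; moreover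
`κ̂, β, d₁, …, d_k` generate a primitive sublattice: every `x ∈ L` whose image
in `L ⊗ ℝ` is a real linear combination of them is an integral linear
combination of them. -/
theorem stmt_0 (k : ℕ) (hk : k ≤ 9) (B A : ℤ) (hB : Even B) (hA : Even A) :
    ∃ (κ β : Fin 22 → ℤ) (d : Fin k → Fin 22 → ℤ),
      K3Form κ κ = B ∧ K3Form β β = A ∧ K3Form κ β = 0 ∧
      (∀ i, K3Form κ (d i) = 1) ∧ (∀ i, K3Form β (d i) = 0) ∧
      (∀ i j, K3Form (d i) (d j) = if i = j then -2 else 0) ∧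
      (∀ (x : Fin 22 → ℤ) (a c : ℝ) (t : Fin k → ℝ),
        (fun n => (x n : ℝ)) =
            a • (fun n => (κ n : ℝ)) + c • (fun n => (β n : ℝ)) +
              ∑ i, t i • (fun n => (d i n : ℝ)) →
        ∃ (a' c' : ℤ) (t' : Fin k → ℤ),
          x = a' • κ + c' • β + ∑ i, t' i • d i) := by
  obtain ⟨p, rfl⟩ := hB
  obtain ⟨q, rfl⟩ := hA
  have hf := Fin.castLE_injective hk
  refine ⟨kappaVec p, betaVec q, fun i => dVec (Fin.castLE hk i), ?_, ?_, ?_, ?_, ?_, ?_,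
    fun x a c t hx => exists_int_coeffs_kappaVec_betaVec_dVec hf p q hx⟩
  · rw [K3Form_eq_K3Bilin, K3Bilin_kappaVec_self, two_mul]
  · rw [K3Form_eq_K3Bilin, K3Bilin_betaVec_self, two_mul]
  · rw [K3Form_eq_K3Bilin, K3Bilin_kappaVec_betaVec]
  · exact fun i => (K3Form_eq_K3Bilin _ _).trans (K3Bilin_kappaVec_dVec p _)
  · exact fun i => (K3Form_eq_K3Bilin _ _).trans (K3Bilin_betaVec_dVec q _)
  · intro i j
    simp only [K3Form_eq_K3Bilin, K3Bilin_dVec_dVec, hf.eq_iff]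
end

section
/- Let L be a free ℤ-module of finite rank with a ℤ-bilinear form b. Let u, v ∈ L and suppose: (i) u is primitive, i.e., for every x ∈ L and a ∈ ℝ with x ⊗ 1 = a·(u ⊗ 1) in L ⊗_ℤ ℝ one has a ∈ ℤ; and (ii) there exists e ∈ L with b(u, e) = 0 and b(v, e) ∈ {1, −1}. Then u and v generate a primitive sublattice of L: for every x ∈ L and all a, c ∈ ℝ with x ⊗ 1 = a·(u ⊗ 1) + c·(v ⊗ 1) in L ⊗_ℤ ℝ, both a and c are integers and x = a·u + c·v in L. -/
/-!
Pairing with `e` is an integral functional that kills `u` and sends `v` to `±1`; extended to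
`ℝ ⊗ L` and applied to `x ⊗ 1 = a (u ⊗ 1) + c (v ⊗ 1)` it gives `c = ±b(x, e) ∈ ℤ`. Then
`(x - c v) ⊗ 1 = a (u ⊗ 1)`, so `a ∈ ℤ` by primitivity of `u`, and `x = a u + c v` because
`L → ℝ ⊗ L` is injective for the flat module `L`.
-/

open scoped TensorProduct

open TensorProduct

section

variable {R A M : Type*} [CommSemiring R] [AddCommMonoid M] [Module R M]

theorem TensorProduct.one_tmul_injective [Semiring A] [Algebra R A] [Module.Flat R M]
    (hA : Function.Injective (algebraMap R A)) :
    Function.Injective fun m : M => (1 : A) ⊗ₜ[R] m := by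
  convert (Module.Flat.rTensor_preserves_injective_linearMap (M := M)
    (Algebra.linearMap R A) hA).comp (TensorProduct.lid R M).symm.injective
  simp

theorem LinearMap.algebraMap_apply_eq_of_one_tmul_eq [CommSemiring A] [Algebra R A]
    (f : M →ₗ[R] R) {x u v : M} {a c : A}
    (h : (1 : A) ⊗ₜ[R] x = a • ((1 : A) ⊗ₜ[R] u) + c • ((1 : A) ⊗ₜ[R] v)) :
    algebraMap R A (f x) = a * algebraMap R A (f u) + c * algebraMap R A (f v) := by
  simpa using congrArg ((Algebra.linearMap R A ∘ₗ f).liftBaseChange A) h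

end

theorem TensorProduct.one_tmul_zsmul {A M : Type*} [Ring A] [AddCommGroup M] [Module ℤ M]
    (k : ℤ) (m : M) : (1 : A) ⊗ₜ[ℤ] (k • m) = (k : A) • ((1 : A) ⊗ₜ[ℤ] m) := by
  rw [Int.cast_smul_eq_zsmul]
  exact map_zsmul (TensorProduct.mk ℤ A M 1) k m

theorem stmt_2_general (L : Type*) [AddCommGroup L] [Module ℤ L]
    [Module.Free ℤ L]
    (b : L →ₗ[ℤ] L →ₗ[ℤ] ℤ) (u v : L)
    (hu : ∀ (x : L) (a : ℝ), ((1 : ℝ) ⊗ₜ[ℤ] x : ℝ ⊗[ℤ] L) = a • ((1 : ℝ) ⊗ₜ[ℤ] u) →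
      ∃ n : ℤ, a = (n : ℝ))
    (he : ∃ e : L, b u e = 0 ∧ (b v e = 1 ∨ b v e = -1)) :
    ∀ (x : L) (a c : ℝ),
      ((1 : ℝ) ⊗ₜ[ℤ] x : ℝ ⊗[ℤ] L) = a • ((1 : ℝ) ⊗ₜ[ℤ] u) + c • ((1 : ℝ) ⊗ₜ[ℤ] v) →
      ∃ n k : ℤ, a = (n : ℝ) ∧ c = (k : ℝ) ∧ x = n • u + k • v := by
  obtain ⟨e, hue, hve⟩ := he
  intro x a c hx
  have hpair : (b x e : ℝ) = c * b v e := by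
    simpa [hue] using (b.flip e).algebraMap_apply_eq_of_one_tmul_eq hx
  obtain ⟨k, hk⟩ : ∃ k : ℤ, c = k := by
    rcases hve with h | h
    · exact ⟨b x e, by simpa [h] using hpair.symm⟩
    · exact ⟨-b x e, by simp [h] at hpair; simp [hpair]⟩
  obtain ⟨n, hn⟩ := hu (x - k • v) a (by
    rw [tmul_sub, one_tmul_zsmul, hx, hk, add_sub_cancel_right])
  refine ⟨n, k, hn, hk, one_tmul_injective (A := ℝ) (algebraMap ℤ ℝ).injective_int ?_⟩
  simp only [tmul_add, one_tmul_zsmul, hx, hn, hk]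

/-- Let `L` be a free `ℤ`-module of finite rank with a `ℤ`-bilinear form `b`.
Suppose (i) `u ∈ L` is primitive: for every `x ∈ L` and `a ∈ ℝ` with
`x ⊗ 1 = a • (u ⊗ 1)` in `L ⊗ ℝ`, one has `a ∈ ℤ`; and (ii) there exists
`e ∈ L` with `b(u, e) = 0` and `b(v, e) = ±1`.  Then `u` and `v` generate a
primitive sublattice of `L`: for every `x ∈ L` and `a, c ∈ ℝ` with
`x ⊗ 1 = a • (u ⊗ 1) + c • (v ⊗ 1)`, both `a` and `c` are integers and
`x = a • u + c • v` in `L`. -/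
theorem stmt_2 (L : Type*) [AddCommGroup L] [Module ℤ L]
    [Module.Free ℤ L] [Module.Finite ℤ L]
    (b : L →ₗ[ℤ] L →ₗ[ℤ] ℤ) (u v : L)
    (hu : ∀ (x : L) (a : ℝ), ((1 : ℝ) ⊗ₜ[ℤ] x : ℝ ⊗[ℤ] L) = a • ((1 : ℝ) ⊗ₜ[ℤ] u) →
      ∃ n : ℤ, a = (n : ℝ))
    (he : ∃ e : L, b u e = 0 ∧ (b v e = 1 ∨ b v e = -1)) :
    ∀ (x : L) (a c : ℝ),
      ((1 : ℝ) ⊗ₜ[ℤ] x : ℝ ⊗[ℤ] L) = a • ((1 : ℝ) ⊗ₜ[ℤ] u) + c • ((1 : ℝ) ⊗ₜ[ℤ] v) →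
      ∃ n k : ℤ, a = (n : ℝ) ∧ c = (k : ℝ) ∧ x = n • u + k • v :=
  stmt_2_general L b u v hu he
end

section
/- Let V be a finite-dimensional real vector space with a nondegenerate symmetric bilinear form b, let L ⊆ V be a countable subset, and let W ⊆ V be a linear subspace. Let W^⊥ = {γ ∈ V : b(γ, w) = 0 for all w ∈ W}. Then the set {γ ∈ W^⊥ : {ℓ ∈ L : b(γ, ℓ) = 0} = W ∩ L} is dense in W^⊥. -/
/-!
For `ℓ ∈ L \ W` the functional `γ ↦ b γ ℓ` does not vanish on `W^⊥`, since `W^⊥⊥ = W` by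
nondegeneracy; so its kernel is a proper closed subspace of `W^⊥` and has dense complement.
By Baire's theorem the countable intersection of these complements is dense in `W^⊥`, and each
of its points `γ` has `b γ ℓ = 0` for `ℓ ∈ L` exactly when `ℓ ∈ W`.
-/

open Filter Topology

section

variable {R M : Type*} [Ring R] [TopologicalSpace R] [TopologicalSpace M]
  [AddCommGroup M] [ContinuousAdd M] [Module R M] [ContinuousSMul R M]
  [NeBot (𝓝[{x : R | IsUnit x}] 0)]

theorem Submodule.dense_compl_of_ne_top {s : Submodule R M} (hs : s ≠ ⊤) :
    Dense (sᶜ : Set M) :=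
  interior_eq_empty_iff_dense_compl.1 <|
    Set.not_nonempty_iff_eq_empty.1 fun h => hs (s.eq_top_of_nonempty_interior' h)

theorem dense_setOf_forall_apply_ne_zero [T1Space R] [BaireSpace M] {ι : Type*} [Countable ι]
    {f : ι → M →L[R] R} (hf : ∀ i, f i ≠ 0) : Dense {x | ∀ i, f i x ≠ 0} := by
  have hker : ∀ i, LinearMap.ker (f i : M →ₗ[R] R) ≠ ⊤ := fun i h =>
    hf i (ContinuousLinearMap.coe_injective (LinearMap.ker_eq_top.1 h))
  have hset : {x | ∀ i, f i x ≠ 0} = ⋂ i, (LinearMap.ker (f i : M →ₗ[R] R) : Set M)ᶜ := by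
    ext; simp
  rw [hset]
  exact dense_iInter_of_isOpen (fun i => (f i).isClosed_ker.isOpen_compl)
    fun i => Submodule.dense_compl_of_ne_top (hker i)

end

theorem LinearMap.BilinForm.exists_mem_orthogonal_apply_ne_zero {K V : Type*} [Field K]
    [AddCommGroup V] [Module K V] [FiniteDimensional K V] {B : LinearMap.BilinForm K V}
    (hB : B.Nondegenerate) (hB₀ : B.IsRefl) {W : Submodule K V} {v : V} (hv : v ∉ W) :
    ∃ γ ∈ B.orthogonal W, B γ v ≠ 0 := by
  rw [← orthogonal_orthogonal hB hB₀ W, mem_orthogonal_iff] at hv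
  push Not at hv
  exact hv

/-- Let `V` be a finite-dimensional real vector space with a nondegenerate
symmetric bilinear form `b`, let `L ⊆ V` be countable and `W ⊆ V` a subspace.
Then the set of `γ ∈ W^⊥` such that `{ℓ ∈ L : b(γ, ℓ) = 0} = W ∩ L` is dense
in `W^⊥ = {γ : b(γ, w) = 0 ∀ w ∈ W}` (for the subspace topology, i.e. `W^⊥`
is contained in the closure of this set). -/
theorem stmt_3 (V : Type*) [NormedAddCommGroup V] [NormedSpace ℝ V]
    [FiniteDimensional ℝ V]
    (b : V →ₗ[ℝ] V →ₗ[ℝ] ℝ)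
    (hsymm : ∀ x y, b x y = b y x)
    (hnd : ∀ x, (∀ y, b x y = 0) → x = 0)
    (L : Set V) (hL : L.Countable) (W : Submodule ℝ V) :
    {γ : V | ∀ w ∈ W, b γ w = 0} ⊆
      closure {γ : V | (∀ w ∈ W, b γ w = 0) ∧
        {ℓ ∈ L | b γ ℓ = 0} = (W : Set V) ∩ L} := by
  have hrefl : b.IsRefl := fun x y h => by rwa [hsymm]
  have hndg : LinearMap.BilinForm.Nondegenerate b :=
    ⟨hnd, fun y hy => hnd y fun x => by rw [hsymm]; exact hy x⟩
  set P := LinearMap.BilinForm.orthogonal b W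
  have mem_P (γ : V) : γ ∈ P ↔ ∀ w ∈ W, b γ w = 0 :=
    forall₂_congr fun w _ => by rw [hsymm]
  have : CompleteSpace P := FiniteDimensional.complete ℝ P
  have : Countable {ℓ : V // ℓ ∈ L ∧ ℓ ∉ W} := (hL.mono fun _ h => h.1).to_subtype
  let f (ℓ : {ℓ : V // ℓ ∈ L ∧ ℓ ∉ W}) : P →L[ℝ] ℝ :=
    LinearMap.toContinuousLinearMap (b.flip ℓ ∘ₗ P.subtype)
  have hf (ℓ) : f ℓ ≠ 0 := fun h => by
    obtain ⟨γ, hγ, hne⟩ :=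
      LinearMap.BilinForm.exists_mem_orthogonal_apply_ne_zero hndg hrefl ℓ.2.2
    exact hne congr($h ⟨γ, hγ⟩)
  intro γ hγ
  refine closure_mono ?_ <|
    Subtype.dense_iff.1 (dense_setOf_forall_apply_ne_zero hf) ((mem_P γ).2 hγ)
  rintro _ ⟨x, hx, rfl⟩
  have hxW := (mem_P x).1 x.2
  refine ⟨hxW, Set.ext fun ℓ =>
    ⟨fun ⟨hℓL, hbℓ⟩ => ⟨?_, hℓL⟩, fun ⟨hℓW, hℓL⟩ => ⟨hℓL, hxW ℓ hℓW⟩⟩⟩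
  by_contra hℓW
  exact hx ⟨ℓ, hℓL, hℓW⟩ hbℓ
end

section
/- Let V be a finite-dimensional real vector space with a nondegenerate symmetric bilinear form b, let L ⊆ V be a countable subset, and let W ⊆ V be a linear subspace. Suppose there exists γ₀ ∈ W^⊥ with b(γ₀, γ₀) > 0. Then for every real number c > 0 there exists γ ∈ W^⊥ with b(γ, γ) = c and {ℓ ∈ L : b(γ, ℓ) = 0} = W ∩ L. -/
/-!
Since `b` is nondegenerate, every linear functional vanishing on `W` is of the form `b u` with
`u ∈ W^⊥`; hence for each `ℓ ∈ L \ W` the hyperplane `{u ∈ W^⊥ | b u ℓ = 0}` is proper, and a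
countable union of proper subspaces is Lebesgue-null, so some `u ∈ W^⊥` has `b u ℓ ≠ 0` for all
`ℓ ∈ L \ W`. On the line `γ₀ + t • u` each of these functionals vanishes at most once, while
`b γ γ > 0` persists for `t` near `0`, so a suitable `t` exists. Finally rescale to get `b γ γ = c`.
-/

open MeasureTheory

theorem Submodule.exists_forall_notMem_of_countable {V ι : Type*} [AddCommGroup V] [Module ℝ V]
    [FiniteDimensional ℝ V] [Countable ι] (p : ι → Submodule ℝ V) (hp : ∀ i, p i ≠ ⊤) :
    ∃ x, ∀ i, x ∉ p i := by
  let e : V ≃ₗ[ℝ] (Fin (Module.finrank ℝ V) → ℝ) := (Module.finBasis ℝ V).equivFun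
  let q i := (p i).map (e : V →ₗ[ℝ] Fin (Module.finrank ℝ V) → ℝ)
  have hnull : volume (⋃ i, (q i : Set (Fin (Module.finrank ℝ V) → ℝ))) = 0 :=
    measure_iUnion_null fun i ↦ Measure.addHaar_submodule volume (q i) <| by
      simpa [q, Submodule.map_eq_top_iff] using hp i
  obtain ⟨y, hy⟩ : ∃ y, y ∉ ⋃ i, (q i : Set (Fin (Module.finrank ℝ V) → ℝ)) := by
    by_contra! h
    rw [Set.eq_univ_of_forall h, Measure.measure_univ_eq_zero] at hnull
    exact NeZero.ne volume hnull
  refine ⟨e.symm y, fun i hi ↦ hy (Set.mem_iUnion.2 ⟨i, ?_⟩)⟩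
  exact ⟨e.symm y, hi, e.apply_symm_apply y⟩

namespace LinearMap.SeparatingLeft

theorem exists_apply_ne_zero_of_notMem {K V : Type*} [Field K] [AddCommGroup V] [Module K V]
    [FiniteDimensional K V] {b : LinearMap.BilinForm K V} (hb : b.SeparatingLeft)
    {W : Submodule K V} {ℓ : V} (hℓ : ℓ ∉ W) :
    ∃ u, (∀ w ∈ W, b u w = 0) ∧ b u ℓ ≠ 0 := by
  obtain ⟨φ, hφℓ, hφW⟩ := W.exists_dual_map_eq_bot_of_notMem hℓ inferInstance
  have hnd : b.Nondegenerate := .ofSeparatingLeft hb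
  let e := b.toDual hnd
  refine ⟨e.symm φ, fun w hw ↦ ?_, ?_⟩
  · rw [← BilinForm.toDual_def hnd, e.apply_symm_apply]
    simpa [hφW] using Submodule.mem_map_of_mem (f := φ) hw
  · rwa [← BilinForm.toDual_def hnd, e.apply_symm_apply]

theorem exists_forall_apply_ne_zero_of_countable {V : Type*} [AddCommGroup V] [Module ℝ V]
    [FiniteDimensional ℝ V] {b : LinearMap.BilinForm ℝ V} (hb : b.SeparatingLeft)
    (W : Submodule ℝ V) {S : Set V} (hS : S.Countable) (hSW : ∀ ℓ ∈ S, ℓ ∉ W) :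
    ∃ u, (∀ w ∈ W, b u w = 0) ∧ ∀ ℓ ∈ S, b u ℓ ≠ 0 := by
  have := hS.to_subtype
  let U := W.dualAnnihilator.comap b
  have hU (u : V) : u ∈ U ↔ ∀ w ∈ W, b u w = 0 := by
    simp [U, Submodule.mem_dualAnnihilator]
  let p (ℓ : S) : Submodule ℝ U := ker ((b.flip ℓ).comp U.subtype)
  obtain ⟨⟨u, huU⟩, hu⟩ := Submodule.exists_forall_notMem_of_countable p fun ℓ hℓ ↦ by
    obtain ⟨u, huW, huℓ⟩ := hb.exists_apply_ne_zero_of_notMem (hSW ℓ ℓ.2)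
    have : (⟨u, (hU u).2 huW⟩ : U) ∈ p ℓ := hℓ ▸ Submodule.mem_top
    exact huℓ this
  exact ⟨u, (hU u).1 huU, fun ℓ hℓ ↦ by simpa [p] using hu ⟨ℓ, hℓ⟩⟩

end LinearMap.SeparatingLeft

theorem exists_pos_apply_self_add_smul {V : Type*} [AddCommGroup V] [Module ℝ V]
    (b : LinearMap.BilinForm ℝ V) {S : Set V} (hS : S.Countable) {γ u : V} (hγ : 0 < b γ γ)
    (hu : ∀ ℓ ∈ S, b u ℓ ≠ 0) :
    ∃ t : ℝ, 0 < b (γ + t • u) (γ + t • u) ∧ ∀ ℓ ∈ S, b (γ + t • u) ℓ ≠ 0 := by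
  have hexpand (t : ℝ) :
      b (γ + t • u) (γ + t • u) = b γ γ + t * (b γ u + b u γ) + t ^ 2 * b u u := by
    simp only [map_add, map_smul, LinearMap.add_apply, LinearMap.smul_apply, smul_eq_mul]
    ring
  have hopen : IsOpen {t : ℝ | 0 < b (γ + t • u) (γ + t • u)} := by
    simp_rw [hexpand]
    exact isOpen_lt continuous_const (by fun_prop)
  -- `t ↦ b (γ + t • u) ℓ` is affine with nonzero slope, so it vanishes only at `-(b γ ℓ / b u ℓ)`.
  have hroots := (hS.image fun ℓ ↦ -(b γ ℓ / b u ℓ)).dense_compl ℝ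
  obtain ⟨t, htpos, htS⟩ := hroots.inter_open_nonempty _ hopen ⟨0, by simpa using hγ⟩
  refine ⟨t, htpos, fun ℓ hℓ h0 ↦ htS ⟨ℓ, hℓ, ?_⟩⟩
  simp only [map_add, map_smul, LinearMap.add_apply, LinearMap.smul_apply, smul_eq_mul] at h0
  field_simp [hu ℓ hℓ]
  linarith

theorem exists_smul_apply_smul_eq {V : Type*} [AddCommGroup V] [Module ℝ V]
    (b : LinearMap.BilinForm ℝ V) {γ : V} (hγ : 0 < b γ γ) {c : ℝ} (hc : 0 < c) :
    ∃ s : ℝ, s ≠ 0 ∧ b (s • γ) (s • γ) = c := by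
  refine ⟨√(c / b γ γ), (Real.sqrt_pos.2 (div_pos hc hγ)).ne', ?_⟩
  simp only [map_smul, LinearMap.smul_apply, smul_eq_mul, ← mul_assoc,
    Real.mul_self_sqrt (div_pos hc hγ).le]
  field_simp

theorem stmt_4_general (V : Type*) [AddCommGroup V] [Module ℝ V] [FiniteDimensional ℝ V]
    (b : V →ₗ[ℝ] V →ₗ[ℝ] ℝ)
    (hnd : ∀ x, (∀ y, b x y = 0) → x = 0)
    (L : Set V) (hL : L.Countable) (W : Submodule ℝ V)
    (γ₀ : V) (hγ₀ : ∀ w ∈ W, b γ₀ w = 0) (hpos : 0 < b γ₀ γ₀) :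
    ∀ c : ℝ, 0 < c →
      ∃ γ : V, (∀ w ∈ W, b γ w = 0) ∧ b γ γ = c ∧
        {ℓ ∈ L | b γ ℓ = 0} = (W : Set V) ∩ L := by
  intro c hc
  have hS : {ℓ ∈ L | ℓ ∉ W}.Countable := hL.mono fun _ ↦ And.left
  obtain ⟨u, huW, hu⟩ :=
    LinearMap.SeparatingLeft.exists_forall_apply_ne_zero_of_countable hnd W hS fun _ ↦ And.right
  obtain ⟨t, htpos, ht⟩ := exists_pos_apply_self_add_smul b hS hpos hu
  obtain ⟨s, hs, hsc⟩ := exists_smul_apply_smul_eq b htpos hc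
  have hγW : ∀ w ∈ W, b (γ₀ + t • u) w = 0 := fun w hw ↦ by simp [hγ₀ w hw, huW w hw]
  refine ⟨s • (γ₀ + t • u), fun w hw ↦ ?_, hsc, ?_⟩
  · rw [map_smul, LinearMap.smul_apply, hγW w hw, smul_zero]
  ext ℓ
  simp only [Set.mem_sep_iff, Set.mem_inter_iff, SetLike.mem_coe, map_smul,
    LinearMap.smul_apply, smul_eq_mul, mul_eq_zero, hs, false_or]
  exact ⟨fun ⟨hℓL, h0⟩ ↦ ⟨by_contra fun hℓW ↦ ht ℓ ⟨hℓL, hℓW⟩ h0, hℓL⟩,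
    fun ⟨hℓW, hℓL⟩ ↦ ⟨hℓL, hγW ℓ hℓW⟩⟩

/-- Let `V` be a finite-dimensional real vector space with a nondegenerate
symmetric bilinear form `b`, let `L ⊆ V` be countable and `W ⊆ V` a subspace.
If some `γ₀ ∈ W^⊥` satisfies `b(γ₀, γ₀) > 0`, then for every `c > 0` there
exists `γ ∈ W^⊥` with `b(γ, γ) = c` and `{ℓ ∈ L : b(γ, ℓ) = 0} = W ∩ L`. -/
theorem stmt_4 (V : Type*) [AddCommGroup V] [Module ℝ V] [FiniteDimensional ℝ V]
    (b : V →ₗ[ℝ] V →ₗ[ℝ] ℝ)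
    (hsymm : ∀ x y, b x y = b y x)
    (hnd : ∀ x, (∀ y, b x y = 0) → x = 0)
    (L : Set V) (hL : L.Countable) (W : Submodule ℝ V)
    (γ₀ : V) (hγ₀ : ∀ w ∈ W, b γ₀ w = 0) (hpos : 0 < b γ₀ γ₀) :
    ∀ c : ℝ, 0 < c →
      ∃ γ : V, (∀ w ∈ W, b γ w = 0) ∧ b γ γ = c ∧
        {ℓ ∈ L | b γ ℓ = 0} = (W : Set V) ∩ L :=
  stmt_4_general V b hnd L hL W γ₀ hγ₀ hpos
end

section
/- Let ℂ^× act on (ℂ² ∖ {0}) × ℂ by λ·(z₁, z₂; u) = (λz₁, λz₂; λ⁻²u), and let Q denote the quotient topological space ((ℂ² ∖ {0}) × ℂ)/ℂ^× with the quotient topology. Let Ẑ ⊆ ℂ³ × ℙ²(ℂ) be the set of pairs (x, p) such that for some (equivalently, every) nonzero representative y ∈ ℂ³ of the projective point p, one has y₁y₃ = y₂² and x_i y_j = x_j y_i for all i, j ∈ {1,2,3}, with the subspace topology. Then the map (ℂ² ∖ {0}) × ℂ → Ẑ sending (z₁, z₂; u) to ((u z₁², u z₁z₂, u z₂²), [z₁²,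 z₁z₂, z₂²]) is well defined, descends to Q, and induces a homeomorphism from Q onto Ẑ. -/
/-!
The map `(z; u) ↦ (u·v(z), [v(z)])`, with `v` the quadratic Veronese map, is continuous and
constant on `ℂ^×`-orbits, hence descends to a continuous map `Q → Ẑ`. Every point of `Ẑ` lies over
the chart `y₀ ≠ 0` or the chart `y₂ ≠ 0` of `ℙ²`, since `y₀ = y₂ = 0` forces `y₁ = 0` by
`y₀y₂ = y₁²`. Over the first chart `(x, [y]) ↦ [(1, y₁/y₀); x₀]` is a two-sided inverse, over the
second `(x, [y]) ↦ [(y₁/y₂, 1); x₂]`, and both are continuous because the quotient map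
`ℂ³ ∖ {0} → ℙ²` is open, so the ratios `y₁/y₀`, `y₁/y₂` are continuous on their charts.
-/

/-- The quotient topology on the complex projective plane
`ℙ²(ℂ) = ℙ ℂ (Fin 3 → ℂ)` (the space of complex lines through `0` in `ℂ³`),
viewed as the quotient of `ℂ³ ∖ {0}` by rescaling. -/
noncomputable instance : TopologicalSpace (Projectivization ℂ (Fin 3 → ℂ)) :=
  instTopologicalSpaceQuotient

/-- The setoid on `(ℂ² ∖ {0}) × ℂ` given by the `ℂ^×`-action
`λ · (z₁, z₂; u) = (λz₁, λz₂; λ⁻²u)`. -/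
def blowupSetoid : Setoid ({z : ℂ × ℂ // z ≠ 0} × ℂ) where
  r a b := ∃ l : ℂ, l ≠ 0 ∧ (b.1 : ℂ × ℂ) = l • (a.1 : ℂ × ℂ) ∧ b.2 = (l ^ 2)⁻¹ * a.2
  iseqv := by
    constructor
    · intro a; exact ⟨1, one_ne_zero, by simp, by simp⟩
    · rintro a b ⟨l, hl, h1, h2⟩
      refine ⟨l⁻¹, inv_ne_zero hl, ?_, ?_⟩
      · rw [h1, smul_smul, inv_mul_cancel₀ hl, one_smul]
      · rw [h2]; field_simp
    · rintro a b c ⟨l, hl, h1, h2⟩ ⟨m, hm, h3, h4⟩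
      refine ⟨m * l, mul_ne_zero hm hl, ?_, ?_⟩
      · rw [h3, h1, smul_smul]
      · rw [h4, h2, mul_pow, mul_inv, mul_assoc]

/-- The subset `Ẑ ⊆ ℂ³ × ℙ²(ℂ)` of pairs `(x, p)` such that some (equivalently,
every) nonzero representative `y` of `p` satisfies `y₁y₃ = y₂²` and
`xᵢyⱼ = xⱼyᵢ` for all `i, j`. -/
def Zhat : Set ((Fin 3 → ℂ) × Projectivization ℂ (Fin 3 → ℂ)) :=
  {p | ∃ (y : Fin 3 → ℂ) (hy : y ≠ 0), p.2 = Projectivization.mk ℂ y hy ∧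
    y 0 * y 2 = (y 1) ^ 2 ∧ ∀ i j, p.1 i * y j = p.1 j * y i}

open Topology
open scoped LinearAlgebra.Projectivization

section LocalInverses

variable {X Y : Type*} [TopologicalSpace X] [TopologicalSpace Y]

noncomputable def Homeomorph.ofLocalInverses (f : X → Y) (hf : Continuous f)
    (h : ∀ y, ∃ g : Y → X, ContinuousAt g y ∧ ∀ᶠ y' in 𝓝 y, ∀ x, f x = y' ↔ g y' = x) :
    X ≃ₜ Y :=
  have hbij : f.Bijective := (Function.bijective_iff_existsUnique f).mpr fun y => by
    obtain ⟨g, -, hg⟩ := h y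
    exact ⟨g y, (hg.self_of_nhds _).mpr rfl, fun x hx => ((hg.self_of_nhds x).mp hx).symm⟩
  { toEquiv := Equiv.ofBijective f hbij
    continuous_toFun := hf
    continuous_invFun := continuous_iff_continuousAt.mpr fun y => by
      obtain ⟨g, hgy, hg⟩ := h y
      exact hgy.congr <| hg.mono fun y' hy' =>
        (hy' _).mp (Equiv.ofBijective_apply_symm_apply f hbij y') }

@[simp]
theorem Homeomorph.coe_ofLocalInverses (f : X → Y) (hf : Continuous f)
    (h : ∀ y, ∃ g : Y → X, ContinuousAt g y ∧ ∀ᶠ y' in 𝓝 y, ∀ x, f x = y' ↔ g y' = x) :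
    ⇑(Homeomorph.ofLocalInverses f hf h) = f :=
  rfl

end LocalInverses

namespace Projectivization

-- The topology of the instance on `ℙ²(ℂ)` above, for arbitrary `K` and `V`.
local instance {K V : Type*} [DivisionRing K] [AddCommGroup V] [Module K V] [TopologicalSpace V] :
    TopologicalSpace (ℙ K V) :=
  instTopologicalSpaceQuotient

section Topology

variable {K V : Type*} [DivisionRing K] [AddCommGroup V] [Module K V] [TopologicalSpace V]
  [ContinuousConstSMul K V]

theorem isOpenQuotientMap_mk' : IsOpenQuotientMap (mk' K : {v : V // v ≠ 0} → ℙ K V) := by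
  refine ⟨Quotient.mk_surjective, continuous_quotient_mk', fun U hU => ?_⟩
  show IsOpen (mk' K ⁻¹' (mk' K '' U))
  have hsat : mk' K ⁻¹' (mk' K '' U) =
      ⋃ c : Kˣ, (fun v : {v : V // v ≠ 0} => (⟨c • v.1, (smul_ne_zero_iff_ne c).mpr v.2⟩ :
        {v : V // v ≠ 0})) ⁻¹' U := by
    ext v
    simp only [Set.mem_preimage, Set.mem_image, Set.mem_iUnion]
    constructor
    · rintro ⟨w, hw, hwv⟩
      obtain ⟨c, hc⟩ := (mk_eq_mk_iff K _ _ w.2 v.2).mp hwv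
      exact ⟨c, (congrArg (· ∈ U) (Subtype.ext hc)).mpr hw⟩
    · rintro ⟨c, hc⟩
      exact ⟨_, hc, (mk_eq_mk_iff K _ _ _ v.2).mpr ⟨c, rfl⟩⟩
  rw [hsat]
  exact isOpen_iUnion fun c => hU.preimage ((continuous_subtype_val.const_smul _).subtype_mk _)

end Topology

section AffineCharts

variable {K ι : Type*} [Field K]

def affineChart (j : ι) : Set (ℙ K (ι → K)) := {p | p.rep j ≠ 0}

theorem mk_mem_affineChart_iff {j : ι} {y : ι → K} (hy : y ≠ 0) :
    mk K y hy ∈ affineChart j ↔ y j ≠ 0 := by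
  obtain ⟨c, hc⟩ := exists_smul_eq_mk_rep K y hy
  simp [affineChart, ← hc, Units.smul_def]

def coordRatio (i j : ι) : ℙ K (ι → K) → K :=
  Projectivization.lift (fun v => v.1 i / v.1 j) fun v w t hvw => by
    have ht : t ≠ 0 := by rintro rfl; exact v.2 (by simpa using hvw)
    simp only [hvw, Pi.smul_apply, smul_eq_mul, mul_div_mul_left _ _ ht]

@[simp]
theorem coordRatio_mk (i j : ι) {y : ι → K} (hy : y ≠ 0) :
    coordRatio i j (mk K y hy) = y i / y j :=
  rfl

variable [TopologicalSpace K]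

theorem isOpen_affineChart [T1Space K] (j : ι) : IsOpen (affineChart (K := K) j) := by
  show IsOpen (mk' K ⁻¹' affineChart j)
  have : mk' K ⁻¹' affineChart (K := K) j = {v : {v : ι → K // v ≠ 0} | v.1 j ≠ 0} :=
    Set.ext fun v => mk_mem_affineChart_iff v.2
  rw [this]
  exact isOpen_ne.preimage ((continuous_apply j).comp continuous_subtype_val)

variable [IsTopologicalDivisionRing K] in
theorem continuousAt_coordRatio (i : ι) {j : ι} {p : ℙ K (ι → K)} (hp : p ∈ affineChart j) :
    ContinuousAt (coordRatio i j) p := by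
  have h := isOpenQuotientMap_mk'.continuousAt_comp_iff (g := coordRatio i j)
    (x := ⟨p.rep, p.rep_nonzero⟩)
  rw [mk'_eq_mk, mk_rep] at h
  exact h.mp <| ((continuous_apply i).comp continuous_subtype_val).continuousAt.div
    ((continuous_apply j).comp continuous_subtype_val).continuousAt hp

end AffineCharts

end Projectivization

section Veronese

variable {R : Type*} [CommRing R]

def veronese (z : R × R) : Fin 3 → R := ![z.1 ^ 2, z.1 * z.2, z.2 ^ 2]

theorem veronese_smul (l : R) (z : R × R) : veronese (l • z) = l ^ 2 • veronese z := by
  simp only [veronese, Prod.smul_fst, Prod.smul_snd, smul_eq_mul, Matrix.smul_cons,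
    Matrix.smul_empty]
  congr 1 <;> ring_nf

theorem veronese_ne_zero [NoZeroDivisors R] {z : R × R} (hz : z ≠ 0) : veronese z ≠ 0 :=
  fun h => hz <| Prod.ext (pow_eq_zero_iff two_ne_zero |>.mp (congrFun h 0))
    (pow_eq_zero_iff two_ne_zero |>.mp (congrFun h 2))

theorem continuous_veronese [TopologicalSpace R] [IsTopologicalRing R] :
    Continuous (veronese : R × R → Fin 3 → R) := by
  unfold veronese
  fun_prop

variable {K : Type*} [Field K] {y : Fin 3 → K}

theorem veronese_one_div (h0 : y 0 ≠ 0) (hy : y 0 * y 2 = y 1 ^ 2) :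
    veronese (1, y 1 / y 0) = (y 0)⁻¹ • y := by
  ext i
  fin_cases i <;>
    simp only [veronese, Fin.zero_eta, Fin.mk_one, Fin.reduceFinMk, Fin.isValue,
      Matrix.cons_val_zero, Matrix.cons_val_one, Matrix.cons_val, Pi.smul_apply, smul_eq_mul] <;>
    field_simp
  linear_combination -hy

theorem veronese_div_one (h2 : y 2 ≠ 0) (hy : y 0 * y 2 = y 1 ^ 2) :
    veronese (y 1 / y 2, 1) = (y 2)⁻¹ • y := by
  ext i
  fin_cases i <;>
    simp only [veronese, Fin.zero_eta, Fin.mk_one, Fin.reduceFinMk, Fin.isValue,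
      Matrix.cons_val_zero, Matrix.cons_val_one, Matrix.cons_val, Pi.smul_apply, smul_eq_mul] <;>
    field_simp
  linear_combination -hy

end Veronese

theorem eq_div_smul_of_mul_eq_mul {K ι : Type*} [Field K] {x y : ι → K}
    (h : ∀ i j, x i * y j = x j * y i) {j : ι} (hj : y j ≠ 0) : x = (x j / y j) • y := by
  ext i
  rw [Pi.smul_apply, smul_eq_mul, div_mul_eq_mul_div, eq_div_iff hj, h]

open Projectivization

noncomputable def blowupMap (a : {z : ℂ × ℂ // z ≠ 0} × ℂ) :
    (Fin 3 → ℂ) × ℙ ℂ (Fin 3 → ℂ) :=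
  (a.2 • veronese a.1.1, mk ℂ (veronese a.1.1) (veronese_ne_zero a.1.2))

theorem blowupMap_mem_Zhat (a : {z : ℂ × ℂ // z ≠ 0} × ℂ) : blowupMap a ∈ Zhat := by
  refine ⟨veronese a.1.1, veronese_ne_zero a.1.2, rfl,
    by show a.1.1.1 ^ 2 * a.1.1.2 ^ 2 = (a.1.1.1 * a.1.1.2) ^ 2; ring, fun i j => ?_⟩
  simp only [blowupMap, Pi.smul_apply, smul_eq_mul]
  ring

theorem blowupMap_eq_of_rel {a b : {z : ℂ × ℂ // z ≠ 0} × ℂ} (h : blowupSetoid a b) :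
    blowupMap a = blowupMap b := by
  obtain ⟨l, hl, h1, h2⟩ := h
  have hv : veronese b.1.1 = l ^ 2 • veronese a.1.1 := by rw [h1, veronese_smul]
  refine Prod.ext ?_ ((mk_eq_mk_iff' ℂ _ _ _ _).mpr ⟨(l ^ 2)⁻¹, ?_⟩)
  · show a.2 • veronese a.1.1 = b.2 • veronese b.1.1
    rw [hv, h2, smul_smul]
    congr 1
    field_simp
  · show (l ^ 2)⁻¹ • veronese b.1.1 = veronese a.1.1
    rw [hv, smul_smul, inv_mul_cancel₀ (pow_ne_zero 2 hl), one_smul]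

theorem continuous_blowupMap : Continuous blowupMap := by
  have hv : Continuous fun a : {z : ℂ × ℂ // z ≠ 0} × ℂ => veronese a.1.1 :=
    continuous_veronese.comp (continuous_subtype_val.comp continuous_fst)
  exact (continuous_snd.smul hv).prodMk
    (continuous_quotient_mk'.comp ((hv.subtype_mk fun a => veronese_ne_zero a.1.2)))

noncomputable def blowupQuotMap : Quotient blowupSetoid → Zhat :=
  Quotient.lift (fun a => ⟨blowupMap a, blowupMap_mem_Zhat a⟩) fun _ _ h =>
    Subtype.ext (blowupMap_eq_of_rel h)

theorem continuous_blowupQuotMap : Continuous blowupQuotMap :=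
  (continuous_blowupMap.subtype_mk blowupMap_mem_Zhat).quotient_lift _

theorem mem_affineChart_zero_or_two {q : (Fin 3 → ℂ) × ℙ ℂ (Fin 3 → ℂ)} (hq : q ∈ Zhat) :
    q.2 ∈ affineChart 0 ∨ q.2 ∈ affineChart 2 := by
  obtain ⟨y, hy, hq2, hconic, -⟩ := hq
  rw [hq2, mk_mem_affineChart_iff, mk_mem_affineChart_iff]
  by_contra! h
  have h1 : y 1 = 0 := pow_eq_zero_iff two_ne_zero |>.mp (by rw [← hconic, h.1, zero_mul])
  exact hy (funext fun i => by fin_cases i <;> simp [h.1, h1, h.2])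

noncomputable def chartSection₀ (q : (Fin 3 → ℂ) × ℙ ℂ (Fin 3 → ℂ)) :
    {z : ℂ × ℂ // z ≠ 0} × ℂ :=
  (⟨(1, coordRatio 1 0 q.2), by simp [Prod.ext_iff]⟩, q.1 0)

noncomputable def chartSection₂ (q : (Fin 3 → ℂ) × ℙ ℂ (Fin 3 → ℂ)) :
    {z : ℂ × ℂ // z ≠ 0} × ℂ :=
  (⟨(coordRatio 1 2 q.2, 1), by simp [Prod.ext_iff]⟩, q.1 2)

theorem blowupMap_chartSection₀ {q : (Fin 3 → ℂ) × ℙ ℂ (Fin 3 → ℂ)} (hq : q ∈ Zhat)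
    (h0 : q.2 ∈ affineChart 0) : blowupMap (chartSection₀ q) = q := by
  obtain ⟨y, hy, hq2, hconic, hcross⟩ := hq
  rw [hq2, mk_mem_affineChart_iff] at h0
  have hv : veronese (1, coordRatio 1 0 q.2) = (y 0)⁻¹ • y := by
    rw [hq2, coordRatio_mk, veronese_one_div h0 hconic]
  refine Prod.ext ?_ ?_
  · show q.1 0 • veronese (1, coordRatio 1 0 q.2) = q.1
    rw [hv, smul_smul, ← div_eq_mul_inv, ← eq_div_smul_of_mul_eq_mul hcross h0]
  · show mk ℂ (veronese (1, coordRatio 1 0 q.2)) _ = q.2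
    conv_rhs => rw [hq2]
    exact (mk_eq_mk_iff' ℂ _ _ _ _).mpr ⟨(y 0)⁻¹, hv.symm⟩

theorem blowupMap_chartSection₂ {q : (Fin 3 → ℂ) × ℙ ℂ (Fin 3 → ℂ)} (hq : q ∈ Zhat)
    (h2 : q.2 ∈ affineChart 2) : blowupMap (chartSection₂ q) = q := by
  obtain ⟨y, hy, hq2, hconic, hcross⟩ := hq
  rw [hq2, mk_mem_affineChart_iff] at h2
  have hv : veronese (coordRatio 1 2 q.2, 1) = (y 2)⁻¹ • y := by
    rw [hq2, coordRatio_mk, veronese_div_one h2 hconic]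
  refine Prod.ext ?_ ?_
  · show q.1 2 • veronese (coordRatio 1 2 q.2, 1) = q.1
    rw [hv, smul_smul, ← div_eq_mul_inv, ← eq_div_smul_of_mul_eq_mul hcross h2]
  · show mk ℂ (veronese (coordRatio 1 2 q.2, 1)) _ = q.2
    conv_rhs => rw [hq2]
    exact (mk_eq_mk_iff' ℂ _ _ _ _).mpr ⟨(y 2)⁻¹, hv.symm⟩

theorem chartSection₀_blowupMap {a : {z : ℂ × ℂ // z ≠ 0} × ℂ}
    (h0 : (blowupMap a).2 ∈ affineChart 0) :
    Quotient.mk blowupSetoid (chartSection₀ (blowupMap a)) = Quotient.mk blowupSetoid a := by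
  obtain ⟨⟨⟨z₁, z₂⟩, hz⟩, u⟩ := a
  have hz₁ : z₁ ≠ 0 := by
    simpa [blowupMap, mk_mem_affineChart_iff, veronese] using h0
  refine Quotient.sound ⟨z₁, hz₁, ?_, ?_⟩ <;>
    simp only [chartSection₀, blowupMap, veronese, coordRatio_mk, Matrix.smul_cons,
      Matrix.smul_empty, Matrix.cons_val_zero, Matrix.cons_val_one, Prod.smul_mk,
      smul_eq_mul, Fin.isValue] <;> field_simp

theorem chartSection₂_blowupMap {a : {z : ℂ × ℂ // z ≠ 0} × ℂ}
    (h2 : (blowupMap a).2 ∈ affineChart 2) :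
    Quotient.mk blowupSetoid (chartSection₂ (blowupMap a)) = Quotient.mk blowupSetoid a := by
  obtain ⟨⟨⟨z₁, z₂⟩, hz⟩, u⟩ := a
  have hz₂ : z₂ ≠ 0 := by
    simpa [blowupMap, mk_mem_affineChart_iff, veronese] using h2
  refine Quotient.sound ⟨z₂, hz₂, ?_, ?_⟩ <;>
    simp only [chartSection₂, blowupMap, veronese, coordRatio_mk, Matrix.smul_cons,
      Matrix.smul_empty, Matrix.cons_val_zero, Matrix.cons_val_one, Matrix.cons_val, Prod.smul_mk,
      smul_eq_mul, Fin.isValue] <;> field_simp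

theorem continuousAt_chartSection₀ {q : (Fin 3 → ℂ) × ℙ ℂ (Fin 3 → ℂ)}
    (h0 : q.2 ∈ affineChart 0) : ContinuousAt chartSection₀ q := by
  unfold chartSection₀
  refine .prodMk (IsInducing.subtypeVal.continuousAt_iff.mpr ?_)
    ((continuous_apply 0).comp continuous_fst).continuousAt
  exact continuousAt_const.prodMk ((continuousAt_coordRatio 1 h0).comp continuousAt_snd)

theorem continuousAt_chartSection₂ {q : (Fin 3 → ℂ) × ℙ ℂ (Fin 3 → ℂ)}
    (h2 : q.2 ∈ affineChart 2) : ContinuousAt chartSection₂ q := by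
  unfold chartSection₂
  refine .prodMk (IsInducing.subtypeVal.continuousAt_iff.mpr ?_)
    ((continuous_apply 2).comp continuous_fst).continuousAt
  exact ((continuousAt_coordRatio 1 h2).comp continuousAt_snd).prodMk continuousAt_const

theorem exists_localInverse_blowupQuotMap {j : Fin 3}
    {σ : (Fin 3 → ℂ) × ℙ ℂ (Fin 3 → ℂ) → {z : ℂ × ℂ // z ≠ 0} × ℂ}
    (hσ_cont : ∀ {q}, q.2 ∈ affineChart j → ContinuousAt σ q)
    (hσ_right : ∀ {q}, q ∈ Zhat → q.2 ∈ affineChart j → blowupMap (σ q) = q)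
    (hσ_left : ∀ {a}, (blowupMap a).2 ∈ affineChart j →
      Quotient.mk blowupSetoid (σ (blowupMap a)) = Quotient.mk blowupSetoid a)
    {q : Zhat} (hq : q.1.2 ∈ affineChart j) :
    ∃ g : Zhat → Quotient blowupSetoid, ContinuousAt g q ∧
      ∀ᶠ q' in 𝓝 q, ∀ x, blowupQuotMap x = q' ↔ g q' = x := by
  refine ⟨fun q' => Quotient.mk blowupSetoid (σ q'.1),
    continuous_quotient_mk'.continuousAt.comp
      ((hσ_cont hq).comp continuous_subtype_val.continuousAt), ?_⟩
  have hchart : IsOpen {q' : Zhat | q'.1.2 ∈ affineChart j} :=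
    (isOpen_affineChart j).preimage (continuous_snd.comp continuous_subtype_val)
  filter_upwards [hchart.mem_nhds hq] with q' hq' x
  constructor
  · rintro rfl
    induction x using Quotient.ind
    exact hσ_left hq'
  · rintro rfl
    exact Subtype.ext (hσ_right q'.2 hq')

/-- The map `(ℂ² ∖ {0}) × ℂ → Ẑ` sending `(z₁, z₂; u)` to
`((uz₁², uz₁z₂, uz₂²), [z₁², z₁z₂, z₂²])` descends to the quotient
`Q = ((ℂ² ∖ {0}) × ℂ)/ℂ^×` and induces a homeomorphism from `Q` onto `Ẑ`. -/
theorem stmt_6 :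
    ∃ h : Quotient blowupSetoid ≃ₜ Zhat,
      ∀ (z : ℂ × ℂ) (hz : z ≠ 0) (u : ℂ)
        (hv : ![z.1 ^ 2, z.1 * z.2, z.2 ^ 2] ≠ 0),
        ((h (Quotient.mk blowupSetoid (⟨z, hz⟩, u)) :
            (Fin 3 → ℂ) × Projectivization ℂ (Fin 3 → ℂ))) =
          (![u * z.1 ^ 2, u * (z.1 * z.2), u * z.2 ^ 2],
            Projectivization.mk ℂ ![z.1 ^ 2, z.1 * z.2, z.2 ^ 2] hv) := by
  refine ⟨Homeomorph.ofLocalInverses blowupQuotMap continuous_blowupQuotMap fun q => ?_,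
    fun z hz u hv => ?_⟩
  · rcases mem_affineChart_zero_or_two q.2 with h0 | h2
    · exact exists_localInverse_blowupQuotMap continuousAt_chartSection₀ blowupMap_chartSection₀
        chartSection₀_blowupMap h0
    · exact exists_localInverse_blowupQuotMap continuousAt_chartSection₂ blowupMap_chartSection₂
        chartSection₂_blowupMap h2
  · rw [Homeomorph.coe_ofLocalInverses]
    exact Prod.ext (by ext i; fin_cases i <;> rfl) rfl
end

section
/- Fix ε > 0, and set A' = {(z₁, z₂) ∈ ℂ² : z₁ ≠ 0 and |z₂|·(1 + |z₁|²) < ε}. Define τ(z₁, z₂) = (z₁⁻¹, z₁²z₂). Then τ maps A' bijectively onto A', τ ∘ τ is the identity on A', and τ is holomorphic on A'. -/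
open Set

section InvSqMul

variable {𝕜 : Type*}

def invSqMul [DivisionRing 𝕜] (z : 𝕜 × 𝕜) : 𝕜 × 𝕜 := (z.1⁻¹, z.1 ^ 2 * z.2)

theorem invSqMul_invSqMul [Field 𝕜] {z : 𝕜 × 𝕜} (hz : z.1 ≠ 0) : invSqMul (invSqMul z) = z := by
  obtain ⟨a, b⟩ := z
  simp only [invSqMul, inv_inv, inv_pow, ← mul_assoc]
  field_simp

theorem norm_mul_one_add_norm_sq_invSqMul [NormedField 𝕜] {z : 𝕜 × 𝕜} (hz : z.1 ≠ 0) :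
    ‖(invSqMul z).2‖ * (1 + ‖(invSqMul z).1‖ ^ 2) = ‖z.2‖ * (1 + ‖z.1‖ ^ 2) := by
  have : ‖z.1‖ ≠ 0 := norm_ne_zero_iff.mpr hz
  simp only [invSqMul, norm_mul, norm_pow, norm_inv]
  field_simp
  ring

theorem bijOn_invSqMul [NormedField 𝕜] (ε : ℝ) :
    BijOn invSqMul {z : 𝕜 × 𝕜 | z.1 ≠ 0 ∧ ‖z.2‖ * (1 + ‖z.1‖ ^ 2) < ε}
      {z | z.1 ≠ 0 ∧ ‖z.2‖ * (1 + ‖z.1‖ ^ 2) < ε} := by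
  have hmaps : MapsTo invSqMul {z : 𝕜 × 𝕜 | z.1 ≠ 0 ∧ ‖z.2‖ * (1 + ‖z.1‖ ^ 2) < ε}
      {z | z.1 ≠ 0 ∧ ‖z.2‖ * (1 + ‖z.1‖ ^ 2) < ε} := fun z hz =>
    ⟨inv_ne_zero hz.1, (norm_mul_one_add_norm_sq_invSqMul hz.1).trans_lt hz.2⟩
  have hinv : LeftInvOn invSqMul invSqMul {z : 𝕜 × 𝕜 | z.1 ≠ 0 ∧ ‖z.2‖ * (1 + ‖z.1‖ ^ 2) < ε} :=
    fun z hz => invSqMul_invSqMul hz.1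
  exact InvOn.bijOn ⟨hinv, hinv⟩ hmaps hmaps

theorem differentiableOn_invSqMul [NontriviallyNormedField 𝕜] :
    DifferentiableOn 𝕜 invSqMul {z : 𝕜 × 𝕜 | z.1 ≠ 0} := fun _ hz =>
  ((differentiableAt_fst.inv hz).prodMk
    ((differentiableAt_fst.pow 2).mul differentiableAt_snd)).differentiableWithinAt

end InvSqMul

theorem stmt_10_general (ε : ℝ)
    (A' : Set (ℂ × ℂ))
    (hA' : A' = {z : ℂ × ℂ | z.1 ≠ 0 ∧ ‖z.2‖ * (1 + ‖z.1‖ ^ 2) < ε})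
    (τ : ℂ × ℂ → ℂ × ℂ) (hτ : τ = fun z => (z.1⁻¹, z.1 ^ 2 * z.2)) :
    Set.BijOn τ A' A' ∧ (∀ z ∈ A', τ (τ z) = z) ∧ DifferentiableOn ℂ τ A' := by
  subst hA' hτ
  exact ⟨bijOn_invSqMul ε, fun z hz => invSqMul_invSqMul hz.1,
    differentiableOn_invSqMul.mono fun z hz => hz.1⟩

/-- Fix `ε > 0` and let `A' = {(z₁, z₂) ∈ ℂ² : z₁ ≠ 0 ∧ |z₂|(1 + |z₁|²) < ε}`.
The map `τ(z₁, z₂) = (z₁⁻¹, z₁² z₂)` maps `A'` bijectively onto `A'`, is an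
involution on `A'`, and is holomorphic on `A'`. -/
theorem stmt_10 (ε : ℝ) (hε : 0 < ε)
    (A' : Set (ℂ × ℂ))
    (hA' : A' = {z : ℂ × ℂ | z.1 ≠ 0 ∧ ‖z.2‖ * (1 + ‖z.1‖ ^ 2) < ε})
    (τ : ℂ × ℂ → ℂ × ℂ) (hτ : τ = fun z => (z.1⁻¹, z.1 ^ 2 * z.2)) :
    Set.BijOn τ A' A' ∧ (∀ z ∈ A', τ (τ z) = z) ∧ DifferentiableOn ℂ τ A' :=
  stmt_10_general ε A' hA' τ hτ
end
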